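/- The set S⁺ = {(s,t,u) ∈ ℝ³ : 0 < s < 1, 0 < u, u < t, t < 1 − u, (1−t)² − su > 0, t² − (1−s)u > 0, (1−2s)(1−2t+tu−su) > 0} equals the union A′ ∪ B′, where A′ = {(s,t,u) ∈ ℝ³ : 0 < s < 1/2, 0 < u < 1/2, (1−u)² − (1−s)u > 0, √((1−s)u) < t < (1−su)/(2−u)} and B′ = {(s,t,u) ∈ ℝ³ : 1/2 < s < 1, 0 < u < 1/2, (1−u)² − su > 0, (1−su)/(2−u) < t < 1 − √(su)}. -/
import Mathlib


/-- The semialgebraic set S⁺, with coordinates (s, t, u) ∈ ℝ³. -/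
def Splus : Set (ℝ × ℝ × ℝ) :=
  {p | 0 < p.1 ∧ p.1 < 1 ∧ 0 < p.2.2 ∧ p.2.2 < p.2.1 ∧ p.2.1 < 1 - p.2.2 ∧
    (1 - p.2.1) ^ 2 - p.1 * p.2.2 > 0 ∧ p.2.1 ^ 2 - (1 - p.1) * p.2.2 > 0 ∧
    (1 - 2 * p.1) * (1 - 2 * p.2.1 + p.2.1 * p.2.2 - p.1 * p.2.2) > 0}

/-- The piece A′ with 0 < s < 1/2. -/
def Aplus : Set (ℝ × ℝ × ℝ) :=
  {p | 0 < p.1 ∧ p.1 < 1/2 ∧ 0 < p.2.2 ∧ p.2.2 < 1/2 ∧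
    (1 - p.2.2) ^ 2 - (1 - p.1) * p.2.2 > 0 ∧
    Real.sqrt ((1 - p.1) * p.2.2) < p.2.1 ∧
    p.2.1 < (1 - p.1 * p.2.2) / (2 - p.2.2)}

/-- The piece B′ with 1/2 < s < 1. -/
def Bplus : Set (ℝ × ℝ × ℝ) :=
  {p | 1/2 < p.1 ∧ p.1 < 1 ∧ 0 < p.2.2 ∧ p.2.2 < 1/2 ∧
    (1 - p.2.2) ^ 2 - p.1 * p.2.2 > 0 ∧
    (1 - p.1 * p.2.2) / (2 - p.2.2) < p.2.1 ∧
    p.2.1 < 1 - Real.sqrt (p.1 * p.2.2)}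

set_option maxHeartbeats 1000000 in
/-- Proposition 5 of the paper: S⁺ = A′ ∪ B′. -/
theorem Splus_eq_union : Splus = Aplus ∪ Bplus := by
  ext ⟨s, t, u⟩
  simp only [Splus, Aplus, Bplus, Set.mem_setOf_eq, Set.mem_union]
  constructor
  · rintro ⟨hs0, hs1, hu0, hut, htu, h1, h2, h3⟩
    have hu2 : u < 1/2 := by linarith
    have ht0 : 0 < t := lt_trans hu0 hut
    have h2u : (0:ℝ) < 2 - u := by linarith
    rcases lt_trichotomy s (1/2) with hs | hs | hs
    · left
      have hf : 1 - 2*t + t*u - s*u > 0 := by nlinarith [h3]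
      refine ⟨hs0, hs, hu0, hu2, by nlinarith, ?_, ?_⟩
      · exact (Real.sqrt_lt' ht0).mpr (by nlinarith)
      · rw [lt_div_iff₀ h2u]; nlinarith
    · exfalso; rw [hs] at h3; norm_num at h3
    · right
      have hf : 1 - 2*t + t*u - s*u < 0 := by nlinarith [h3]
      have h1t : 0 < 1 - t := by linarith
      refine ⟨hs, hs1, hu0, hu2, by nlinarith, ?_, ?_⟩
      · rw [div_lt_iff₀ h2u]; nlinarith
      · have : Real.sqrt (s*u) < 1 - t := (Real.sqrt_lt' h1t).mpr (by nlinarith)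
        linarith
  · rintro (⟨hs0, hs, hu0, hu2, hq, hst, hts⟩ | ⟨hs, hs1, hu0, hu2, hq, hst, hts⟩)
    · -- A′ ⊆ S⁺
      have h2u : (0:ℝ) < 2 - u := by linarith
      have ht0 : 0 < t := lt_of_le_of_lt (Real.sqrt_nonneg _) hst
      have hx : (1-s)*u < t^2 := (Real.sqrt_lt' ht0).mp hst
      have htd : t*(2-u) < 1 - s*u := (lt_div_iff₀ h2u).mp hts
      have hut : u < t := by nlinarith
      have htu : t < 1 - u := by nlinarith
      have hA : (0:ℝ) < 1 - (1-s)*u := by nlinarith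
      have hX : 1 - (1-s)*u < (2-u)*(1-t) := by nlinarith
      have hX2 : (1-(1-s)*u)^2 < ((2-u)*(1-t))^2 := by nlinarith
      have h5 : (0:ℝ) < (1-s*u)*((1-u)^2-s*u) := by
        apply mul_pos <;> nlinarith
      have hid : (1-(1-s)*u)^2 - s*u*(2-u)^2 = (1-s*u)*((1-u)^2-s*u) := by ring
      have hkey : s*u*(2-u)^2 < (1-(1-s)*u)^2 := by linarith
      have h6 : s*u*(2-u)^2 < ((2-u)*(1-t))^2 := hkey.trans hX2
      refine ⟨hs0, by linarith, hu0, hut, htu, ?_, by nlinarith, ?_⟩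
      · nlinarith [h6, mul_pos h2u h2u]
      · have : (0:ℝ) < 1 - 2*s := by linarith
        have hf : (0:ℝ) < 1 - 2*t + t*u - s*u := by nlinarith [htd]
        exact mul_pos this hf
    · -- B′ ⊆ S⁺
      have h2u : (0:ℝ) < 2 - u := by linarith
      have hsu : s*u < 1 := by nlinarith
      have htd : 1 - s*u < t*(2-u) := (div_lt_iff₀ h2u).mp hst
      have ht0 : 0 < t := by nlinarith [htd, h2u, hsu]
      have hut : u < t := by nlinarith [htd, hq, h2u]
      have h1t : 0 < 1 - t := lt_of_le_of_lt (Real.sqrt_nonneg _) (by linarith)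
      have hsq : s*u < (1-t)^2 := (Real.sqrt_lt' h1t).mp (by linarith)
      have htu : t < 1 - u := by nlinarith
      have hA : (0:ℝ) < 1 - s*u := by linarith
      have hX : 1 - s*u < (2-u)*t := by nlinarith
      have hX2 : (1-s*u)^2 < ((2-u)*t)^2 := by nlinarith
      have h5 : (0:ℝ) < (1-(1-s)*u)*((1-u)^2-(1-s)*u) := by
        apply mul_pos <;> nlinarith
      have hid : (1-s*u)^2 - (1-s)*u*(2-u)^2 = (1-(1-s)*u)*((1-u)^2-(1-s)*u) := by ring
      have hkey : (1-s)*u*(2-u)^2 < (1-s*u)^2 := by linarith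
      have h6 : (1-s)*u*(2-u)^2 < ((2-u)*t)^2 := hkey.trans hX2
      refine ⟨by linarith, hs1, hu0, hut, htu, by nlinarith, ?_, ?_⟩
      · nlinarith [h6, mul_pos h2u h2u]
      · have hn : (1:ℝ) - 2*s < 0 := by linarith
        have hf : 1 - 2*t + t*u - s*u < 0 := by nlinarith [htd]
        exact mul_pos_of_neg_of_neg hn hf
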